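/- Let n ≥ 1 and let F : (ℳⁿ)ⁿ → ℝ be a nonnegative function which is additive in each variable, and suppose there is a constant c ≥ 0 such that F(A₁,…,Aₙ) ≤ c·D(A₁,…,Aₙ) for all A₁,…,Aₙ ∈ ℳⁿ. Then there exists a constant a ≥ 0 such that F(A₁,…,Aₙ) = a·D(A₁,…,Aₙ) for all A₁,…,Aₙ ∈ ℳⁿ. -/

import Mathlib

/-!
Both `F` and the mixed discriminant are additive in each slot on the positive semidefinite cone,
and every positive semidefinite matrix is a sum of matrices `v vᵀ`, so it suffices to compare
them on tuples `(v₁ v₁ᵀ, …, vₙ vₙᵀ)`, where the mixed discriminant is `det(V)² / n!` for the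
matrix `V` with rows `vᵢ`. Write `f V` for the value of `F` on this tuple. By the bound, `f`
vanishes on singular `V`. Additivity and nonnegativity make `F` monotone, hence positively
homogeneous, in each slot, so scaling a row by `d` multiplies `f` by `d²`. Adding a multiple of
one row to another leaves `f` unchanged, because along such a line `f` is a nonnegative solution
of Jensen's equation. Therefore `f (P * V) = det(P)² f V`, and `f V = det(V)² f 1`.
-/

/-- The mixed discriminant of `n` real `n × n` matrices:
`D(A₁,…,Aₙ) = (1/n!) Σ_{σ ∈ S(n)} det(M_σ)`, where the `j`-th column of `M_σ`
is the `j`-th column of `A_{σ(j)}`. -/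
noncomputable def mixedDisc (n : ℕ) (A : Fin n → Matrix (Fin n) (Fin n) ℝ) : ℝ :=
  ((n.factorial : ℝ))⁻¹ *
    ∑ σ : Equiv.Perm (Fin n), (Matrix.of fun i j => A (σ j) i j).det

open Matrix Function

lemma nonpos_of_forall_nat_mul_le {x C : ℝ} (h : ∀ k : ℕ, k * x ≤ C) : x ≤ 0 := by
  by_contra! hx
  obtain ⟨k, hk⟩ := exists_nat_gt (C / x)
  rw [div_lt_iff₀ hx] at hk
  linarith [h k]

/-- `φ - φ 0` is additive and bounded below, hence zero. -/
lemma eq_apply_zero_of_jensen_of_nonneg {φ : ℝ → ℝ}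
    (hjensen : ∀ t s, φ (t + s) + φ (t - s) = 2 * φ t) (hφ : ∀ t, 0 ≤ φ t) (t : ℝ) :
    φ t = φ 0 := by
  let A : ℝ →+ ℝ := AddMonoidHom.mk' (fun u => φ u - φ 0) fun x y => by
    have hxy := hjensen ((x + y) / 2) ((x - y) / 2)
    have hsum := hjensen ((x + y) / 2) ((x + y) / 2)
    ring_nf at hxy hsum ⊢
    linarith
  have hA : ∀ x, 0 ≤ A x := fun x => by
    refine neg_nonpos.mp (nonpos_of_forall_nat_mul_le (C := φ 0) fun k => ?_)
    have hk : A (k • x) = k * A x := by rw [map_nsmul, nsmul_eq_mul]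
    simp only [nsmul_eq_mul, A, AddMonoidHom.mk'_apply] at hk ⊢
    linarith [hφ (k * x)]
  have := map_neg A t ▸ hA (-t)
  have := hA t
  simp only [A, AddMonoidHom.mk'_apply] at *
  linarith

section PSDCone

variable {m : Type*}

def AdditiveOnPSD (G : Matrix m m ℝ → ℝ) : Prop :=
  ∀ B C : Matrix m m ℝ, B.PosSemidef → C.PosSemidef → G (B + C) = G B + G C

namespace AdditiveOnPSD

variable {G : Matrix m m ℝ → ℝ}

lemma map_zero (hG : AdditiveOnPSD G) : G 0 = 0 := by
  have h := hG 0 0 .zero .zero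
  rw [add_zero] at h
  linarith

lemma map_sum (hG : AdditiveOnPSD G) {κ : Type*} (s : Finset κ) {B : κ → Matrix m m ℝ}
    (hB : ∀ k, (B k).PosSemidef) : G (∑ k ∈ s, B k) = ∑ k ∈ s, G (B k) := by
  classical
  induction s using Finset.induction_on with
  | empty => simpa using hG.map_zero
  | insert k s hk ih =>
    rw [Finset.sum_insert hk, Finset.sum_insert hk,
      hG _ _ (hB k) (posSemidef_sum s fun k _ => hB k), ih]

lemma map_natCast_smul (hG : AdditiveOnPSD G) {B : Matrix m m ℝ} (hB : B.PosSemidef) (k : ℕ) :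
    G ((k : ℝ) • B) = k * G B := by
  simpa [Finset.sum_const, ← Nat.cast_smul_eq_nsmul ℝ] using hG.map_sum (Finset.range k) fun _ => hB

lemma le_of_posSemidef_sub (hG : AdditiveOnPSD G) (hG0 : ∀ B, B.PosSemidef → 0 ≤ G B)
    {B C : Matrix m m ℝ} (hB : B.PosSemidef) (hCB : (C - B).PosSemidef) : G B ≤ G C := by
  have h := hG B (C - B) hB hCB
  rw [add_sub_cancel] at h
  linarith [hG0 _ hCB]

lemma parallelogram [Finite m] (hG : AdditiveOnPSD G) (x y : m → ℝ) :
    G (vecMulVec (x + y) (x + y)) + G (vecMulVec (x - y) (x - y)) =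
      2 * G (vecMulVec x x) + 2 * G (vecMulVec y y) := by
  have hv : ∀ v : m → ℝ, (vecMulVec v v).PosSemidef := posSemidef_vecMulVec_self_star
  have hsum : vecMulVec (x + y) (x + y) + vecMulVec (x - y) (x - y) =
      (vecMulVec x x + vecMulVec x x) + (vecMulVec y y + vecMulVec y y) := by
    ext a b
    simp only [Matrix.add_apply, vecMulVec_apply, Pi.add_apply, Pi.sub_apply]
    ring
  have := hG _ _ (hv (x + y)) (hv (x - y))
  rw [hsum, hG _ _ ((hv x).add (hv x)) ((hv y).add (hv y)), hG _ _ (hv x) (hv x),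
    hG _ _ (hv y) (hv y)] at this
  linarith

/-- Sandwiching `u` between `⌊u⌋₊` and `⌊u⌋₊ + 1` bounds the error of homogeneity by `G B`. -/
lemma abs_map_smul_sub_le (hG : AdditiveOnPSD G) (hG0 : ∀ B, B.PosSemidef → 0 ≤ G B)
    {B : Matrix m m ℝ} (hB : B.PosSemidef) {u : ℝ} (hu : 0 ≤ u) :
    |G (u • B) - u * G B| ≤ G B := by
  have hfloor := Nat.floor_le hu
  have hceil := Nat.lt_floor_add_one u
  have hlow : G ((⌊u⌋₊ : ℝ) • B) ≤ G (u • B) :=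
    hG.le_of_posSemidef_sub hG0 (hB.smul (Nat.cast_nonneg _))
      (by rw [← sub_smul]; exact hB.smul (sub_nonneg.mpr hfloor))
  have hup : G (u • B) ≤ G (((⌊u⌋₊ + 1 : ℕ) : ℝ) • B) :=
    hG.le_of_posSemidef_sub hG0 (hB.smul hu)
      (by rw [← sub_smul]; exact hB.smul (by push_cast; linarith))
  rw [hG.map_natCast_smul hB] at hlow hup
  push_cast at hup
  have hGB := hG0 B hB
  rw [abs_le]
  constructor <;> nlinarith

lemma map_smul (hG : AdditiveOnPSD G) (hG0 : ∀ B, B.PosSemidef → 0 ≤ G B)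
    {B : Matrix m m ℝ} (hB : B.PosSemidef) {s : ℝ} (hs : 0 ≤ s) : G (s • B) = s * G B := by
  have hmul : ∀ k : ℕ, |k * (G (s • B) - s * G B)| ≤ G B := fun k => by
    have := hG.abs_map_smul_sub_le hG0 hB (mul_nonneg k.cast_nonneg hs)
    rwa [mul_smul, hG.map_natCast_smul (hB.smul hs), mul_assoc, ← mul_sub] at this
  have hle := nonpos_of_forall_nat_mul_le fun k => (le_abs_self _).trans (hmul k)
  have hge := nonpos_of_forall_nat_mul_le fun k =>
    (mul_neg (k : ℝ) _ ▸ neg_le_abs _).trans (hmul k)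
  linarith

end AdditiveOnPSD

end PSDCone

section Multiadditive

variable {ι m : Type*}

def outerRows (M : Matrix ι m ℝ) : ι → Matrix m m ℝ := fun i => vecMulVec (M i) (M i)

lemma posSemidef_outerRows [Finite m] (M : Matrix ι m ℝ) (i : ι) : (outerRows M i).PosSemidef :=
  posSemidef_vecMulVec_self_star (M i)

variable [DecidableEq ι]

def IsPSDMultiadditive (F : (ι → Matrix m m ℝ) → ℝ) : Prop :=
  ∀ A : ι → Matrix m m ℝ, (∀ j, (A j).PosSemidef) → ∀ i, AdditiveOnPSD fun B => F (update A i B)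

lemma posSemidef_update {A : ι → Matrix m m ℝ} (hA : ∀ j, (A j).PosSemidef)
    {B : Matrix m m ℝ} (hB : B.PosSemidef) (i : ι) : ∀ j, (update A i B j).PosSemidef :=
  (forall_update_iff A fun _ M => M.PosSemidef).mpr ⟨hB, fun j _ => hA j⟩

lemma isPSDMultiadditive_of_update_add {F : (ι → Matrix m m ℝ) → ℝ}
    (hadd : ∀ (A : ι → Matrix m m ℝ) (i : ι) (B : Matrix m m ℝ), (∀ j, (A j).PosSemidef) →
      B.PosSemidef → F (update A i (A i + B)) = F A + F (update A i B)) :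
    IsPSDMultiadditive F := fun A hA i B C hB hC => by
  simpa using hadd (update A i B) i C (posSemidef_update hA hB i) hC

lemma outerRows_updateRow (M : Matrix ι m ℝ) (i : ι) (v : m → ℝ) :
    outerRows (M.updateRow i v) = update (outerRows M) i (vecMulVec v v) := by
  funext j
  rcases eq_or_ne j i with rfl | hji
  · simp [outerRows]
  · simp [outerRows, hji]

namespace IsPSDMultiadditive

variable {F G : (ι → Matrix m m ℝ) → ℝ}

lemma const_mul (hF : IsPSDMultiadditive F) (a : ℝ) : IsPSDMultiadditive fun A => a * F A :=
  fun A hA i B C hB hC => by simp only [hF A hA i B C hB hC, mul_add]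

lemma map_smul_univ [Fintype ι] (hF : IsPSDMultiadditive F)
    (hF0 : ∀ A : ι → Matrix m m ℝ, (∀ j, (A j).PosSemidef) → 0 ≤ F A)
    {A : ι → Matrix m m ℝ} (hA : ∀ j, (A j).PosSemidef) {s : ι → ℝ} (hs : ∀ i, 0 ≤ s i) :
    F (fun i => s i • A i) = (∏ i, s i) * F A := by
  have hpiece : ∀ t : Finset ι,
      F (t.piecewise (fun i => s i • A i) A) = (∏ i ∈ t, s i) * F A := by
    intro t
    induction t using Finset.induction_on with
    | empty => simp
    | insert a t ha ih =>
      have hpsd : ∀ j, (t.piecewise (fun i => s i • A i) A j).PosSemidef := fun j => by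
        by_cases hj : j ∈ t
        · simpa [hj] using (hA j).smul (hs j)
        · simpa [hj] using hA j
      have hslot := (hF _ hpsd a).map_smul (fun B hB => hF0 _ (posSemidef_update hpsd hB a))
        (hA a) (hs a)
      have hfixed : update (t.piecewise (fun i => s i • A i) A) a (A a) =
          t.piecewise (fun i => s i • A i) A :=
        update_eq_self_iff.mpr (Finset.piecewise_eq_of_notMem _ _ _ ha).symm
      simp only [hfixed] at hslot
      rw [Finset.piecewise_insert, hslot, ih, Finset.prod_insert ha, mul_assoc]
  simpa using hpiece Finset.univ

lemma eq_of_forall_outerRows [Fintype ι] [Finite m] (hF : IsPSDMultiadditive F)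
    (hG : IsPSDMultiadditive G) (h : ∀ M : Matrix ι m ℝ, F (outerRows M) = G (outerRows M))
    {A : ι → Matrix m m ℝ} (hA : ∀ j, (A j).PosSemidef) : F A = G A := by
  suffices key : ∀ s : Finset ι, ∀ A : ι → Matrix m m ℝ, (∀ j, (A j).PosSemidef) →
      (∀ j ∉ s, ∃ v, A j = vecMulVec v v) → F A = G A from
    key Finset.univ A hA fun j hj => absurd (Finset.mem_univ j) hj
  intro s
  induction s using Finset.induction_on with
  | empty =>
    intro A _ hrank
    choose M hM using fun j => hrank j (Finset.notMem_empty j)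
    obtain rfl : A = outerRows M := funext hM
    exact h M
  | insert i s hi ih =>
    intro A hA hrank
    obtain ⟨k, v, hv⟩ := posSemidef_iff_eq_sum_vecMulVec.mp (hA i)
    simp only [star_trivial] at hv
    have hvv : ∀ l, (vecMulVec (v l) (v l)).PosSemidef := fun l => posSemidef_vecMulVec_self_star _
    rw [← update_eq_self i A, hv, (hF A hA i).map_sum _ hvv, (hG A hA i).map_sum _ hvv]
    refine Finset.sum_congr rfl fun l _ => ih _ (posSemidef_update hA (hvv l) i) fun j hj => ?_
    rcases eq_or_ne j i with rfl | hji
    · exact ⟨v l, update_self ..⟩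
    · rw [update_of_ne hji]
      exact hrank j (by simp [hji, hj])

end IsPSDMultiadditive

end Multiadditive

section MixedDiscriminant

variable {n : ℕ}

lemma of_update_perm_eq_updateCol (A : Fin n → Matrix (Fin n) (Fin n) ℝ) (i : Fin n)
    (X : Matrix (Fin n) (Fin n) ℝ) (σ : Equiv.Perm (Fin n)) :
    (of fun a b => update A i X (σ b) a b) =
      (of fun a b => A (σ b) a b).updateCol (σ⁻¹ i) fun a => X a (σ⁻¹ i) := by
  ext a b
  rcases eq_or_ne b (σ⁻¹ i) with rfl | hb
  · simp
  · have hσb : σ b ≠ i := fun h => hb (σ.eq_inv_iff_eq.mpr h)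
    rw [updateCol_ne hb]
    simp [hσb]

lemma mixedDisc_update_add (A : Fin n → Matrix (Fin n) (Fin n) ℝ) (i : Fin n)
    (B C : Matrix (Fin n) (Fin n) ℝ) :
    mixedDisc n (update A i (B + C)) = mixedDisc n (update A i B) + mixedDisc n (update A i C) := by
  simp only [mixedDisc, of_update_perm_eq_updateCol, ← mul_add, ← Finset.sum_add_distrib]
  congr 1
  refine Finset.sum_congr rfl fun σ _ => ?_
  rw [← det_updateCol_add]
  rfl

lemma isPSDMultiadditive_mixedDisc : IsPSDMultiadditive (mixedDisc n) :=
  fun A _ i B C _ _ => mixedDisc_update_add A i B C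

lemma mixedDisc_outerRows (M : Matrix (Fin n) (Fin n) ℝ) :
    mixedDisc n (outerRows M) = (n.factorial : ℝ)⁻¹ * M.det ^ 2 := by
  have hσ : ∀ σ : Equiv.Perm (Fin n), (of fun a b => outerRows M (σ b) a b) =
      Mᵀ.submatrix id σ * diagonal fun b => M (σ b) b := by
    intro σ
    ext a b
    simp [outerRows, mul_diagonal, vecMulVec_apply]
  have hdet : ∀ σ : Equiv.Perm (Fin n), (of fun a b => outerRows M (σ b) a b).det =
      M.det * (Equiv.Perm.sign σ * ∏ b, M (σ b) b) := by
    intro σ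
    rw [hσ, det_mul, det_permute', det_transpose, det_diagonal]
    ring
  simp only [mixedDisc, hdet, ← Finset.mul_sum, ← det_apply', sq]

end MixedDiscriminant

section OuterRows

variable {m : Type*} [Fintype m] [DecidableEq m] {F : (m → Matrix m m ℝ) → ℝ}

lemma transvection_mul_eq_updateRow (i j : m) (c : ℝ) (M : Matrix m m ℝ) :
    transvection i j c * M = M.updateRow i (M i + c • M j) := by
  ext a b
  rcases eq_or_ne a i with rfl | hai
  · simp
  · simp [hai]

namespace IsPSDMultiadditive

lemma apply_outerRows_diagonal_mul (hF : IsPSDMultiadditive F)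
    (hF0 : ∀ A : m → Matrix m m ℝ, (∀ j, (A j).PosSemidef) → 0 ≤ F A) (d : m → ℝ)
    (M : Matrix m m ℝ) :
    F (outerRows (diagonal d * M)) = (diagonal d).det ^ 2 * F (outerRows M) := by
  have hrows : outerRows (diagonal d * M) = fun i => d i ^ 2 • outerRows M i := by
    funext i
    ext a b
    simp only [outerRows, diagonal_mul, vecMulVec_apply, Matrix.smul_apply, smul_eq_mul]
    ring
  rw [hrows, hF.map_smul_univ hF0 (posSemidef_outerRows M) fun i => sq_nonneg (d i),
    det_diagonal, Finset.prod_pow]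

/-- Along the line `u ↦ M i + u • M j` in row `i`, the parallelogram law makes `F` satisfy
Jensen's equation: its quadratic part is `F` at a singular matrix, hence zero. -/
lemma apply_outerRows_transvection_mul (hF : IsPSDMultiadditive F)
    (hF0 : ∀ A : m → Matrix m m ℝ, (∀ j, (A j).PosSemidef) → 0 ≤ F A)
    (hdeg : ∀ M : Matrix m m ℝ, M.det = 0 → F (outerRows M) = 0)
    {i j : m} (hij : i ≠ j) (c : ℝ) (M : Matrix m m ℝ) :
    F (outerRows (transvection i j c * M)) = F (outerRows M) := by
  have hG : AdditiveOnPSD fun B => F (update (outerRows M) i B) :=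
    hF _ (posSemidef_outerRows M) i
  have hquad : ∀ s : ℝ, F (update (outerRows M) i (vecMulVec (s • M j) (s • M j))) = 0 :=
    fun s => by
      rw [← outerRows_updateRow]
      exact hdeg _ (by rw [det_updateRow_smul, det_updateRow_eq_zero hij.symm, mul_zero])
  have hconst := eq_apply_zero_of_jensen_of_nonneg
    (φ := fun u => F (outerRows (M.updateRow i (M i + u • M j))))
    (fun t s => by
      have hpar := hG.parallelogram (M i + t • M j) (s • M j)
      simp only [outerRows_updateRow, add_smul, sub_smul, ← add_assoc, ← add_sub_assoc]
      simp only [hquad] at hpar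
      linarith)
    (fun u => hF0 _ (posSemidef_outerRows _)) c
  simpa [transvection_mul_eq_updateRow] using hconst

lemma apply_outerRows_mul (hF : IsPSDMultiadditive F)
    (hF0 : ∀ A : m → Matrix m m ℝ, (∀ j, (A j).PosSemidef) → 0 ≤ F A)
    (hdeg : ∀ M : Matrix m m ℝ, M.det = 0 → F (outerRows M) = 0) (P : Matrix m m ℝ) :
    ∀ M : Matrix m m ℝ, F (outerRows (P * M)) = P.det ^ 2 * F (outerRows M) := by
  induction P using diagonal_transvection_induction with
  | hdiag d _ => exact hF.apply_outerRows_diagonal_mul hF0 d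
  | htransvec t =>
    intro M
    rw [TransvectionStruct.det, one_pow, one_mul]
    exact hF.apply_outerRows_transvection_mul hF0 hdeg t.hij t.c M
  | hmul P Q hP hQ =>
    intro M
    rw [Matrix.mul_assoc, hP, hQ, det_mul]
    ring

end IsPSDMultiadditive

end OuterRows

theorem mixedDisc_minimality_general {n : ℕ}
    (F : (Fin n → Matrix (Fin n) (Fin n) ℝ) → ℝ)
    (hnonneg : ∀ A : Fin n → Matrix (Fin n) (Fin n) ℝ,
      (∀ j, (A j).PosSemidef) → 0 ≤ F A)
    (hadd : ∀ (A : Fin n → Matrix (Fin n) (Fin n) ℝ) (i : Fin n)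
      (B : Matrix (Fin n) (Fin n) ℝ), (∀ j, (A j).PosSemidef) → B.PosSemidef →
      F (Function.update A i (A i + B)) = F A + F (Function.update A i B))
    (c : ℝ)
    (hbound : ∀ A : Fin n → Matrix (Fin n) (Fin n) ℝ,
      (∀ j, (A j).PosSemidef) → F A ≤ c * mixedDisc n A) :
    ∃ a : ℝ, 0 ≤ a ∧ ∀ A : Fin n → Matrix (Fin n) (Fin n) ℝ,
      (∀ j, (A j).PosSemidef) → F A = a * mixedDisc n A := by
  have hF : IsPSDMultiadditive F := isPSDMultiadditive_of_update_add hadd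
  have hdeg : ∀ M : Matrix (Fin n) (Fin n) ℝ, M.det = 0 → F (outerRows M) = 0 := fun M hM =>
    le_antisymm (by simpa [mixedDisc_outerRows, hM] using hbound _ (posSemidef_outerRows M))
      (hnonneg _ (posSemidef_outerRows M))
  refine ⟨n.factorial * F (outerRows 1),
    mul_nonneg (Nat.cast_nonneg _) (hnonneg _ (posSemidef_outerRows 1)), fun A hA => ?_⟩
  refine hF.eq_of_forall_outerRows (isPSDMultiadditive_mixedDisc.const_mul _) (fun M => ?_) hA
  have hM := hF.apply_outerRows_mul hnonneg hdeg M 1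
  rw [Matrix.mul_one] at hM
  rw [hM, mixedDisc_outerRows]
  field_simp

/-- A nonnegative function of `n` positive semidefinite symmetric matrices which is
additive in each variable and bounded from above by a constant multiple of the mixed
discriminant is itself a constant multiple of the mixed discriminant. -/
theorem mixedDisc_minimality {n : ℕ} (hn : 1 ≤ n)
    (F : (Fin n → Matrix (Fin n) (Fin n) ℝ) → ℝ)
    (hnonneg : ∀ A : Fin n → Matrix (Fin n) (Fin n) ℝ,
      (∀ j, (A j).PosSemidef) → 0 ≤ F A)
    (hadd : ∀ (A : Fin n → Matrix (Fin n) (Fin n) ℝ) (i : Fin n)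
      (B : Matrix (Fin n) (Fin n) ℝ), (∀ j, (A j).PosSemidef) → B.PosSemidef →
      F (Function.update A i (A i + B)) = F A + F (Function.update A i B))
    (c : ℝ) (hc : 0 ≤ c)
    (hbound : ∀ A : Fin n → Matrix (Fin n) (Fin n) ℝ,
      (∀ j, (A j).PosSemidef) → F A ≤ c * mixedDisc n A) :
    ∃ a : ℝ, 0 ≤ a ∧ ∀ A : Fin n → Matrix (Fin n) (Fin n) ℝ,
      (∀ j, (A j).PosSemidef) → F A = a * mixedDisc n A :=
  mixedDisc_minimality_general F hnonneg hadd c hbound
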